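/- With v_3 defined by the recursive Mex algorithm, for every n ≥ 0 one has v_3(n+1) - v_3(n) ∈ {3, 4, ..., 12}. -/

import Mathlib

/-- Minimum excluded value of a set of natural numbers. -/
noncomputable def mex (S : Set ℕ) : ℕ := sInf {m : ℕ | m ∉ S}

/-- Coordinates of a set of triples. -/
def coords (G : Set (ℕ × ℕ × ℕ)) : Set ℕ :=
  {k | ∃ x ∈ G, k = x.1 ∨ k = x.2.1 ∨ k = x.2.2}

/-- Pairwise coordinate differences of a set of triples. -/
def diffs (G : Set (ℕ × ℕ × ℕ)) : Set ℕ :=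
  {d | ∃ x ∈ G, d = x.2.1 - x.1 ∨ d = x.2.2 - x.2.1 ∨ d = x.2.2 - x.1}

/-- One step of the Mex algorithm: the next P-position. -/
noncomputable def step (G : Set (ℕ × ℕ × ℕ)) : ℕ × ℕ × ℕ :=
  let F := coords G
  let D := diffs G
  let a := mex F
  let b := mex ((fun d => a + d) '' D ∪ Set.Icc 1 a ∪ F)
  let c := mex ((fun d => b + d) '' D ∪ Set.Icc 1 b ∪ F)
  (a, b, c)

/-- The sets `G_n` of P-positions computed by the Mex algorithm. -/
noncomputable def Gset : ℕ → Set (ℕ × ℕ × ℕ)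
  | 0 => {(0, 0, 0)}
  | n + 1 => Gset n ∪ {step (Gset n)}

/-- The `n`-th P-position `(v_1(n), v_2(n), v_3(n))`. -/
noncomputable def v : ℕ → ℕ × ℕ × ℕ
  | 0 => (0, 0, 0)
  | n + 1 => step (Gset n)

noncomputable def v1 (n : ℕ) : ℕ := (v n).1
noncomputable def v2 (n : ℕ) : ℕ := (v n).2.1
noncomputable def v3 (n : ℕ) : ℕ := (v n).2.2

/-- `F_n`: the set of coordinates of elements of `G_n`. -/
noncomputable def Fset (n : ℕ) : Set ℕ := coords (Gset n)

/-- `D_n`: the set of pairwise coordinate differences over `G_n`. -/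
noncomputable def Dset (n : ℕ) : Set ℕ := diffs (Gset n)

/-!
Write `aₙ, bₙ, cₙ` for `v₁(n), v₂(n), v₃(n)`, and `xₙ = bₙ - aₙ`, `yₙ = cₙ - bₙ`, `zₙ = cₙ - aₙ`.
By induction on `n`: `aₙ ≤ bₙ ≤ cₙ`, `yₙ ≤ xₙ ≤ yₙ + 2`, `[0, yₙ] ⊆ Dₙ` (and `yₙ + 1 ∈ Dₙ` when
`xₙ = yₙ + 2`), and the sequences `a, x, y` increase strictly with `xₙ < yₙ₊₁`. Hence the
`b`'s are `2`-spaced, the `c`'s `3`-spaced and the `z`'s `2`-spaced, and the mex steps read: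
* `aₙ < aₙ₊₁ ≤ aₙ + 4`, as the four integers above `aₙ` cannot all be `b`'s or `c`'s;
* `t := mex Dₙ` satisfies `yₙ < t ≤ yₙ + 4`, since above `yₙ` the set `Dₙ` consists of `xₙ` and
  the `z`'s; moreover `t = yₙ + 4` forces `xₙ = yₙ + 2`, and `xₙ < t`;
* `bₙ₊₁ = aₙ₊₁ + t + ε` with `0 ≤ ε ≤ 2`: if `ε > 0` then `aₙ₊₁ + t` is a `c`, so
  `aₙ₊₁ + t + 1` and `aₙ₊₁ + t + 2` are not, and `t + 1`, `t + 2` cannot both be `z`'s;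
* `cₙ₊₁ = bₙ₊₁ + t`, i.e. `yₙ₊₁ = t`.
Then `cₙ₊₁ - cₙ = (aₙ₊₁ - aₙ) + (xₙ₊₁ - xₙ) + (yₙ₊₁ - yₙ)`, each term at least `1`, and at most
`4 + 5 + 3` or, when `t = yₙ + 4`, `4 + 4 + 4`.
-/

theorem mex_le {S : Set ℕ} {k : ℕ} (hk : k ∉ S) : mex S ≤ k := Nat.sInf_le hk

theorem mem_of_lt_mex {S : Set ℕ} {m : ℕ} (h : m < mex S) : m ∈ S :=
  not_not.1 (Nat.notMem_of_lt_sInf h)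

theorem mex_notMem {S : Set ℕ} (hS : S.Finite) : mex S ∉ S :=
  Nat.sInf_mem hS.infinite_compl.nonempty

theorem le_mex {S : Set ℕ} {k : ℕ} (hS : S.Finite) (h : ∀ m < k, m ∈ S) : k ≤ mex S :=
  not_lt.1 fun hk => mex_notMem hS (h _ hk)

theorem mex_mono {S T : Set ℕ} (hST : S ⊆ T) (hT : T.Finite) : mex S ≤ mex T :=
  le_mex hT fun _ hm => hST (mem_of_lt_mex hm)

def Spaced (d : ℕ) (S : Set ℕ) : Prop :=
  S.Pairwise fun x y => x + d ≤ y ∨ y + d ≤ x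

theorem Spaced.not_forall_add_mem_union {S T : Set ℕ} (hS : Spaced 2 S) (hT : Spaced 3 T)
    (m : ℕ) : ¬ ∀ k < 4, m + k ∈ S ∪ T := by
  intro h
  rcases h 1 (by norm_num) with h1 | h1 <;> rcases h 2 (by norm_num) with h2 | h2
  · have := hS h1 h2 (by omega); omega
  · rcases h 0 (by norm_num) with h0 | h0
    · have := hS h0 h1 (by omega); omega
    · have := hT h0 h2 (by omega); omega
  · rcases h 3 (by norm_num) with h3 | h3
    · have := hS h2 h3 (by omega); omega
    · have := hT h1 h3 (by omega); omega
  · have := hT h1 h2 (by omega); omega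

theorem Spaced.eq_add_one_of_forall_add_mem_insert {Z : Set ℕ} (hZ : Spaced 2 Z) {x m : ℕ}
    (h : ∀ k < 3, m + k ∈ insert x Z) : x = m + 1 := by
  by_contra hx
  have h1 : m + 1 ∈ Z := (h 1 (by norm_num)).resolve_left (Ne.symm hx)
  rcases h 0 (by norm_num) with h0 | h0 <;> rcases h 2 (by norm_num) with h2 | h2
  · omega
  · have := hZ h1 h2 (by omega); omega
  · have := hZ h0 h1 (by omega); omega
  · have := hZ h0 h1 (by omega); omega

theorem add_mul_sub_le_of_add_le_succ {f : ℕ → ℕ} {d n : ℕ} (h : ∀ j < n, f j + d ≤ f (j + 1))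
    {i j : ℕ} (hij : i ≤ j) (hjn : j ≤ n) : f i + d * (j - i) ≤ f j := by
  induction j, hij using Nat.le_induction with
  | base => simp
  | succ j hij ih =>
    have := h j (by omega)
    have := ih (by omega)
    rw [Nat.sub_add_comm hij, Nat.mul_succ]
    omega

theorem spaced_image_Iic {f : ℕ → ℕ} {d n : ℕ} (h : ∀ j < n, f j + d ≤ f (j + 1)) :
    Spaced d (f '' Set.Iic n) := by
  rintro _ ⟨i, hi, rfl⟩ _ ⟨j, hj, rfl⟩ hne
  have key {i j : ℕ} (hij : i < j) (hj : j ≤ n) : f i + d ≤ f j :=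
    (Nat.add_le_add_left (Nat.le_mul_of_pos_right d (by omega)) _).trans
      (add_mul_sub_le_of_add_le_succ h hij.le hj)
  rcases lt_or_gt_of_ne (ne_of_apply_ne f hne) with hij | hij
  · exact Or.inl (key hij hj)
  · exact Or.inr (key hij hi)

theorem v1_succ (n : ℕ) : v1 (n + 1) = mex (Fset n) := rfl

theorem v2_succ (n : ℕ) :
    v2 (n + 1) = mex ((v1 (n + 1) + ·) '' Dset n ∪ Set.Icc 1 (v1 (n + 1)) ∪ Fset n) := rfl

theorem v3_succ (n : ℕ) :
    v3 (n + 1) = mex ((v2 (n + 1) + ·) '' Dset n ∪ Set.Icc 1 (v2 (n + 1)) ∪ Fset n) := rfl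

theorem mem_Gset {n : ℕ} {p : ℕ × ℕ × ℕ} : p ∈ Gset n ↔ ∃ j ≤ n, v j = p := by
  induction n with
  | zero => simp [Gset, v, eq_comm]
  | succ n ih =>
    simp only [Gset, Set.mem_union, ih, Set.mem_singleton_iff, Nat.le_succ_iff, or_and_right,
      exists_or, exists_eq_left]
    exact or_congr_right eq_comm

theorem Fset_eq (n : ℕ) : Fset n = v1 '' Set.Iic n ∪ v2 '' Set.Iic n ∪ v3 '' Set.Iic n := by
  ext k
  simp only [Fset, coords, mem_Gset]
  aesop

theorem Dset_eq (n : ℕ) : Dset n = (fun j => v2 j - v1 j) '' Set.Iic n ∪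
    (fun j => v3 j - v2 j) '' Set.Iic n ∪ (fun j => v3 j - v1 j) '' Set.Iic n := by
  ext k
  simp only [Dset, diffs, mem_Gset]
  aesop

theorem Fset_finite (n : ℕ) : (Fset n).Finite := by
  rw [Fset_eq]
  exact (((Set.finite_Iic n).image _).union ((Set.finite_Iic n).image _)).union
    ((Set.finite_Iic n).image _)

theorem Dset_finite (n : ℕ) : (Dset n).Finite := by
  rw [Dset_eq]
  exact (((Set.finite_Iic n).image _).union ((Set.finite_Iic n).image _)).union
    ((Set.finite_Iic n).image _)

theorem Fset_mono {m n : ℕ} (h : m ≤ n) : Fset m ⊆ Fset n := by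
  rw [Fset_eq, Fset_eq]
  gcongr

theorem Dset_mono {m n : ℕ} (h : m ≤ n) : Dset m ⊆ Dset n := by
  rw [Dset_eq, Dset_eq]
  gcongr

theorem v1_strictMono : StrictMono v1 := by
  refine strictMono_nat_of_lt_succ fun n => lt_of_le_of_ne ?_ fun h => ?_
  · cases n with
    | zero => exact Nat.zero_le _
    | succ n => exact mex_mono (Fset_mono n.le_succ) (Fset_finite _)
  · refine mex_notMem (Fset_finite n) ?_
    rw [← v1_succ, ← h, Fset_eq]
    exact Or.inl (Or.inl ⟨n, Set.self_mem_Iic, rfl⟩)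

theorem gap₁₂_mem_Dset (n : ℕ) : v2 n - v1 n ∈ Dset n := by
  rw [Dset_eq]; exact Or.inl (Or.inl ⟨n, Set.self_mem_Iic, rfl⟩)

theorem gap₂₃_mem_Dset (n : ℕ) : v3 n - v2 n ∈ Dset n := by
  rw [Dset_eq]; exact Or.inl (Or.inr ⟨n, Set.self_mem_Iic, rfl⟩)

theorem zero_mem_Fset (n : ℕ) : 0 ∈ Fset n := by
  rw [Fset_eq]; exact Or.inl (Or.inl ⟨0, Set.mem_Iic.2 (Nat.zero_le n), rfl⟩)

theorem finite_image_add_Dset_union (a n : ℕ) :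
    ((a + ·) '' Dset n ∪ Set.Icc 1 a ∪ Fset n).Finite :=
  (((Dset_finite n).image _).union (Set.finite_Icc _ _)).union (Fset_finite n)

theorem add_mex_Dset_le_mex (a n : ℕ) :
    a + mex (Dset n) ≤ mex ((a + ·) '' Dset n ∪ Set.Icc 1 a ∪ Fset n) := by
  refine le_mex (finite_image_add_Dset_union a n) fun m hm => ?_
  rcases Nat.eq_zero_or_pos m with rfl | hm0
  · exact Or.inr (zero_mem_Fset n)
  rcases le_or_gt m a with hma | hma
  · exact Or.inl (Or.inr ⟨hm0, hma⟩)
  · exact Or.inl (Or.inl ⟨m - a, mem_of_lt_mex (by omega), by dsimp only; omega⟩)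

theorem v1_succ_add_mex_Dset_le (n : ℕ) : v1 (n + 1) + mex (Dset n) ≤ v2 (n + 1) :=
  add_mex_Dset_le_mex _ n

-- `gap₁₂`, `gap₂₃`, `gap₁₃` stand for `v2 n - v1 n`, `v3 n - v2 n`, `v3 n - v1 n`. The inequalities
-- between `v1`, `v2`, `v3` are not strict so that the initial triple `(0, 0, 0)` satisfies them.
structure Shape (n : ℕ) : Prop where
  v1_le_v2 : v1 n ≤ v2 n
  v2_le_v3 : v2 n ≤ v3 n
  gap₂₃_le_gap₁₂ : v3 n - v2 n ≤ v2 n - v1 n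
  gap₁₂_le_gap₂₃_add_two : v2 n - v1 n ≤ v3 n - v2 n + 2
  mem_Dset_of_le_gap₂₃ : ∀ k ≤ v3 n - v2 n, k ∈ Dset n
  gap₂₃_add_one_mem_Dset : v2 n - v1 n = v3 n - v2 n + 2 → v3 n - v2 n + 1 ∈ Dset n

structure Growth (n : ℕ) : Prop where
  gap₁₂_lt : v2 n - v1 n < v2 (n + 1) - v1 (n + 1)
  gap₂₃_lt : v3 n - v2 n < v3 (n + 1) - v2 (n + 1)
  gap₁₂_lt_gap₂₃_succ : v2 n - v1 n < v3 (n + 1) - v2 (n + 1)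

structure Invariant (n : ℕ) : Prop where
  shape : ∀ j ≤ n, Shape j
  growth : ∀ j < n, Growth j

theorem shape_zero : Shape 0 where
  v1_le_v2 := le_rfl
  v2_le_v3 := le_rfl
  gap₂₃_le_gap₁₂ := le_rfl
  gap₁₂_le_gap₂₃_add_two := Nat.le_add_right _ _
  mem_Dset_of_le_gap₂₃ k hk := by
    rw [Nat.le_zero.1 hk]
    exact gap₁₂_mem_Dset 0
  gap₂₃_add_one_mem_Dset h := absurd h (by decide)

namespace Invariant

variable {n : ℕ}

theorem v2_add_two_le (h : Invariant n) : ∀ j < n, v2 j + 2 ≤ v2 (j + 1) := by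
  intro j hj
  have := v1_strictMono (Nat.lt_add_one j)
  have := (h.shape j hj.le).v1_le_v2
  have := (h.shape (j + 1) hj).v1_le_v2
  have := (h.growth j hj).gap₁₂_lt
  omega

theorem v3_add_three_le (h : Invariant n) : ∀ j < n, v3 j + 3 ≤ v3 (j + 1) := by
  intro j hj
  have := h.v2_add_two_le j hj
  have := (h.shape j hj.le).v2_le_v3
  have := (h.shape (j + 1) hj).v2_le_v3
  have := (h.growth j hj).gap₂₃_lt
  omega

theorem gap₁₃_add_two_le (h : Invariant n) :
    ∀ j < n, v3 j - v1 j + 2 ≤ v3 (j + 1) - v1 (j + 1) := by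
  intro j hj
  obtain ⟨hab, hbc, -, -, -, -⟩ := h.shape j hj.le
  obtain ⟨hab', hbc', -, -, -, -⟩ := h.shape (j + 1) hj
  obtain ⟨hx, hy, -⟩ := h.growth j hj
  omega

theorem spaced_v2 (h : Invariant n) : Spaced 2 (v2 '' Set.Iic n) :=
  spaced_image_Iic h.v2_add_two_le

theorem spaced_v3 (h : Invariant n) : Spaced 3 (v3 '' Set.Iic n) :=
  spaced_image_Iic h.v3_add_three_le

theorem spaced_gap₁₃ (h : Invariant n) :
    Spaced 2 ((fun j => v3 j - v1 j) '' Set.Iic n) :=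
  spaced_image_Iic h.gap₁₃_add_two_le

theorem mem_Fset (h : Invariant n) {m : ℕ} (hm : m ∈ Fset n) :
    m ≤ v1 n ∨ m ≤ v2 n ∧ m ∈ v2 '' Set.Iic n ∨ m ≤ v3 n ∧ m ∈ v3 '' Set.Iic n := by
  rw [Fset_eq] at hm
  rcases hm with (⟨j, hj, rfl⟩ | ⟨j, hj, rfl⟩) | ⟨j, hj, rfl⟩
  · exact Or.inl (v1_strictMono.monotone hj)
  · have := add_mul_sub_le_of_add_le_succ h.v2_add_two_le hj le_rfl
    exact Or.inr (Or.inl ⟨by omega, j, hj, rfl⟩)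
  · have := add_mul_sub_le_of_add_le_succ h.v3_add_three_le hj le_rfl
    exact Or.inr (Or.inr ⟨by omega, j, hj, rfl⟩)

theorem gap₂₃_le (h : Invariant n) {j : ℕ} (hj : j ≤ n) : v3 j - v2 j ≤ v3 n - v2 n := by
  have := add_mul_sub_le_of_add_le_succ (f := fun j => v3 j - v2 j) (d := 1)
    (fun j hj => (h.growth j hj).gap₂₃_lt) hj le_rfl
  omega

theorem mem_Dset (h : Invariant n) {m : ℕ} (hm : m ∈ Dset n) :
    m ≤ v3 n - v2 n ∨ m = v2 n - v1 n ∨ m ∈ (fun j => v3 j - v1 j) '' Set.Iic n := by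
  rw [Dset_eq] at hm
  rcases hm with (⟨j, hj, rfl⟩ | ⟨j, hj, rfl⟩) | hz
  · dsimp only
    rcases (Set.mem_Iic.1 hj).lt_or_eq with hj | rfl
    · have := (h.growth j hj).gap₁₂_lt_gap₂₃_succ
      have := h.gap₂₃_le (show j + 1 ≤ n by omega)
      exact Or.inl (by omega)
    · exact Or.inr (Or.inl rfl)
  · exact Or.inl (h.gap₂₃_le hj)
  · exact Or.inr (Or.inr hz)

theorem v1_succ_le (h : Invariant n) : v1 (n + 1) ≤ v1 n + 4 := by
  by_contra! hlt
  refine h.spaced_v2.not_forall_add_mem_union h.spaced_v3 (v1 n + 1) fun k hk => ?_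
  have hmem : v1 n + 1 + k ∈ Fset n := mem_of_lt_mex (by rw [← v1_succ]; omega)
  rcases h.mem_Fset hmem with hle | ⟨-, hb⟩ | ⟨-, hc⟩
  · omega
  · exact Or.inl hb
  · exact Or.inr hc

theorem gap₂₃_lt_mex_Dset (h : Invariant n) : v3 n - v2 n < mex (Dset n) :=
  le_mex (Dset_finite n) fun _ hm => (h.shape n le_rfl).mem_Dset_of_le_gap₂₃ _ (by omega)

theorem gap₁₂_eq_of_forall_add_mem (h : Invariant n) {m : ℕ} (hm : v3 n - v2 n < m)
    (hD : ∀ k < 3, m + k ∈ Dset n) : v2 n - v1 n = m + 1 := by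
  refine h.spaced_gap₁₃.eq_add_one_of_forall_add_mem_insert fun k hk => ?_
  rcases h.mem_Dset (hD k hk) with hle | hx | hz
  · omega
  · exact Or.inl hx
  · exact Or.inr hz

theorem gap₁₂_eq_of_le_mex_Dset (h : Invariant n) (ht : v3 n - v2 n + 4 ≤ mex (Dset n)) :
    v2 n - v1 n = v3 n - v2 n + 2 :=
  h.gap₁₂_eq_of_forall_add_mem (by omega) fun _ _ => mem_of_lt_mex (by omega)

theorem mex_Dset_le (h : Invariant n) : mex (Dset n) ≤ v3 n - v2 n + 4 := by
  by_contra! ht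
  have := h.gap₁₂_eq_of_le_mex_Dset ht.le
  have := h.gap₁₂_eq_of_forall_add_mem (m := v3 n - v2 n + 2) (by omega)
    fun _ _ => mem_of_lt_mex (by omega)
  omega

theorem gap₁₂_lt_mex_Dset (h : Invariant n) : v2 n - v1 n < mex (Dset n) := by
  have hy := h.gap₂₃_lt_mex_Dset
  have ht := mex_notMem (Dset_finite n)
  have hx : mex (Dset n) ≠ v2 n - v1 n := fun heq => ht (heq ▸ gap₁₂_mem_Dset n)
  have hxy := (h.shape n le_rfl).gap₁₂_le_gap₂₃_add_two
  by_contra! hle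
  have hK := (h.shape n le_rfl).gap₂₃_add_one_mem_Dset (by omega)
  exact ht (by rwa [show mex (Dset n) = v3 n - v2 n + 1 by omega])

theorem mem_gap₁₃_of_mex_Dset_lt (h : Invariant n) {k : ℕ} (hk : mex (Dset n) < k)
    (hD : k ∈ Dset n) : k ∈ (fun j => v3 j - v1 j) '' Set.Iic n := by
  have := h.gap₂₃_lt_mex_Dset
  have := h.gap₁₂_lt_mex_Dset
  rcases h.mem_Dset hD with hle | hx | hz
  · omega
  · omega
  · exact hz

theorem mem_Dset_or_mem_v3_of_lt_v2_succ (h : Invariant n) {k : ℕ} (hk : mex (Dset n) ≤ k)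
    (hlt : v1 (n + 1) + k < v2 (n + 1)) : k ∈ Dset n ∨ v1 (n + 1) + k ∈ v3 '' Set.Iic n := by
  have hy := h.gap₂₃_lt_mex_Dset
  have hx := h.gap₁₂_lt_mex_Dset
  have ha := v1_strictMono (Nat.lt_add_one n)
  have hab := (h.shape n le_rfl).v1_le_v2
  rcases mem_of_lt_mex (hlt.trans_eq (v2_succ n)) with (⟨d, hd, hdk⟩ | hIcc) | hF
  · left
    rwa [show k = d by simp only at hdk; omega]
  · exact absurd hIcc.2 (by omega)
  · rcases h.mem_Fset hF with hle | ⟨hle, -⟩ | ⟨-, hc⟩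
    · omega
    · omega
    · exact Or.inr hc

theorem v1_succ_add_mex_Dset_mem (h : Invariant n)
    (hlt : v1 (n + 1) + mex (Dset n) < v2 (n + 1)) :
    v1 (n + 1) + mex (Dset n) ∈ v3 '' Set.Iic n :=
  (h.mem_Dset_or_mem_v3_of_lt_v2_succ le_rfl hlt).resolve_left (mex_notMem (Dset_finite n))

theorem mex_Dset_add_one_mem (h : Invariant n)
    (hlt : v1 (n + 1) + mex (Dset n) + 1 < v2 (n + 1)) : mex (Dset n) + 1 ∈ Dset n := by
  have hc := h.v1_succ_add_mex_Dset_mem (by omega)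
  refine (h.mem_Dset_or_mem_v3_of_lt_v2_succ (by omega) hlt).resolve_right fun hc' => ?_
  have := h.spaced_v3 hc hc' (by omega)
  omega

theorem v2_succ_le (h : Invariant n) : v2 (n + 1) ≤ v1 (n + 1) + mex (Dset n) + 2 := by
  by_contra! hlt
  have hc := h.v1_succ_add_mex_Dset_mem (by omega)
  have h1 := h.mem_gap₁₃_of_mex_Dset_lt (by omega) (h.mex_Dset_add_one_mem (by omega))
  rcases h.mem_Dset_or_mem_v3_of_lt_v2_succ (k := mex (Dset n) + 2) (by omega) (by omega)
    with h2 | h2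
  · have := h.spaced_gap₁₃ h1 (h.mem_gap₁₃_of_mex_Dset_lt (by omega) h2) (by omega)
    omega
  · have := h.spaced_v3 hc h2 (by omega)
    omega

theorem v3_succ_eq (h : Invariant n) : v3 (n + 1) = v2 (n + 1) + mex (Dset n) := by
  have hb := v1_succ_add_mex_Dset_le n
  have hy := h.gap₂₃_lt_mex_Dset
  have hx := h.gap₁₂_lt_mex_Dset
  have ha := v1_strictMono (Nat.lt_add_one n)
  obtain ⟨hab, hbc, -, -, -, -⟩ := h.shape n le_rfl
  rw [v3_succ]
  refine le_antisymm (mex_le ?_) (add_mex_Dset_le_mex _ n)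
  rintro ((⟨d, hd, hdt⟩ | hIcc) | hF)
  · have hdt : d = mex (Dset n) := by simp only at hdt; omega
    exact mex_notMem (Dset_finite n) (hdt ▸ hd)
  · exact absurd hIcc.2 (by omega)
  · have := h.mem_Fset hF
    omega

theorem shape_succ (h : Invariant n) : Shape (n + 1) := by
  have hb := v1_succ_add_mex_Dset_le n
  have hb' := h.v2_succ_le
  have hc := h.v3_succ_eq
  refine ⟨by omega, by omega, by omega, by omega, fun k hk => ?_, fun hx => ?_⟩
  · obtain hk | rfl := hk.lt_or_eq
    · exact Dset_mono n.le_succ (mem_of_lt_mex (by omega))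
    · exact gap₂₃_mem_Dset _
  · rw [show v3 (n + 1) - v2 (n + 1) + 1 = mex (Dset n) + 1 by omega]
    exact Dset_mono n.le_succ (h.mex_Dset_add_one_mem (by omega))

theorem growth_self (h : Invariant n) : Growth n := by
  have hb := v1_succ_add_mex_Dset_le n
  have hc := h.v3_succ_eq
  have hy := h.gap₂₃_lt_mex_Dset
  have hx := h.gap₁₂_lt_mex_Dset
  exact ⟨by omega, by omega, by omega⟩

theorem succ (h : Invariant n) : Invariant (n + 1) where
  shape j hj := (Nat.le_succ_iff.1 hj).elim (h.shape j) fun hj => hj ▸ h.shape_succ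
  growth j hj := (Nat.lt_succ_iff_lt_or_eq.1 hj).elim (h.growth j) fun hj => hj ▸ h.growth_self

theorem v3_succ_le (h : Invariant n) : v3 (n + 1) ≤ v3 n + 12 := by
  have hb := v1_succ_add_mex_Dset_le n
  have := h.v1_succ_le
  have := h.v2_succ_le
  have := h.v3_succ_eq
  have := h.mex_Dset_le
  obtain ⟨hab, hbc, hyx, -, -, -⟩ := h.shape n le_rfl
  by_cases ht : v3 n - v2 n + 4 ≤ mex (Dset n)
  · have := h.gap₁₂_eq_of_le_mex_Dset ht
    omega
  · omega

end Invariant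

theorem invariant (n : ℕ) : Invariant n := by
  induction n with
  | zero => exact ⟨fun j hj => Nat.le_zero.1 hj ▸ shape_zero, fun j hj => absurd hj j.not_lt_zero⟩
  | succ n ih => exact ih.succ

theorem stmt12 : ∀ n : ℕ, (v3 (n + 1) : ℤ) - v3 n ∈ Set.Icc (3 : ℤ) 12 := by
  intro n
  have hlo := (invariant (n + 1)).v3_add_three_le n (Nat.lt_add_one n)
  have hhi := (invariant n).v3_succ_le
  rw [Set.mem_Icc]
  omega
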